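/- arXiv:1207.3633 — 4 statements merged into one kernel-verified Lean document; each statement's English description precedes it below -/
import Mathlib

section
/- For every integer ℓ ≥ 2, the grid G = {1, …, ℓ−1} × {1, …, ℓ−1} ⊆ ℝ² contains no ℓ collinear points and contains no empty pentagon. In particular, G is a set of (ℓ−1)² points with neither an empty pentagon nor ℓ collinear points. -/
/-!
One of the two coordinate projections is injective on any line, so a line meets the
`n × n` grid in at most `n` points. Among five lattice points two agree in the parity of
both coordinates, so their midpoint is again a grid point. For a pentagon of the grid this
midpoint lies in its convex hull, hence, the pentagon being empty, is one of its vertices;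
but the midpoint of two distinct points of a convex set is never an extreme point.
-/

open Set

/-- Points in the plane. -/
abbrev Pt : Type := ℝ × ℝ

/-- The 2×2 determinant of two vectors in the plane. -/
def det2 (u v : Pt) : ℝ := u.1 * v.2 - u.2 * v.1

/-- The line through two points `u v` (all of `ℝ²` if `u = v`). -/
def lineThrough (u v : Pt) : Set Pt := {x | det2 (v - u) (x - u) = 0}

/-- The open half-plane on the positive side of the oriented line `u v`. -/
def sidePos (u v : Pt) : Set Pt := {x | 0 < det2 (v - u) (x - u)}

/-- The open half-plane on the negative side of the oriented line `u v`. -/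
def sideNeg (u v : Pt) : Set Pt := {x | det2 (v - u) (x - u) < 0}

/-- `X` is in strictly convex position: every point of `X` is an extreme
point of the convex hull of `X`. -/
def StrictlyConvexPos (X : Set Pt) : Prop :=
  ∀ x ∈ X, x ∈ Set.extremePoints ℝ (convexHull ℝ X)

/-- `X` is in weakly convex position: every point of `X` lies on the
frontier of the convex hull of `X`. -/
def WeaklyConvexPos (X : Set Pt) : Prop :=
  ∀ x ∈ X, x ∈ frontier (convexHull ℝ X)

/-- `X` is an empty pentagon in `P`. -/
def EmptyPentagonIn (P X : Set Pt) : Prop :=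
  X ⊆ P ∧ X.ncard = 5 ∧ StrictlyConvexPos X ∧ P ∩ convexHull ℝ X = X

/-- `P` contains an empty pentagon. -/
def HasEmptyPentagon (P : Set Pt) : Prop := ∃ X, EmptyPentagonIn P X

/-- `P` contains `ℓ` collinear points: some line contains at least `ℓ` points of `P`. -/
def HasCollinearPoints (P : Set Pt) (ℓ : ℕ) : Prop :=
  ∃ S ⊆ P, S.Finite ∧ ℓ ≤ S.ncard ∧ Collinear ℝ S

/-- `c` lies strictly to the left of the oriented line from `a` to `b`. -/
def ccwStrict (a b c : Pt) : Prop := 0 < det2 (b - a) (c - a)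

/-- The list of points `l` is the vertex list of a strictly convex polygon
traversed counterclockwise: for every directed edge (consecutive in the cyclic
order), all other listed points lie strictly to its left. -/
def StrictConvexCCWList (l : List Pt) : Prop :=
  3 ≤ l.length ∧
  ∀ i j : Fin l.length, j ≠ i → j.val ≠ (i.val + 1) % l.length →
    ccwStrict (l.get i) (l.get ⟨(i.val + 1) % l.length, Nat.mod_lt _ i.pos⟩) (l.get j)

/-- The points of the list `l` are in strictly convex position, appearing in
this cyclic order (in one of the two orientations) on their convex hull. -/
def StrictConvexCyclic (l : List Pt) : Prop :=
  StrictConvexCCWList l ∨ StrictConvexCCWList l.reverse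

/-- `[u,v]` is an edge of the (weakly convex) point set `L`: a segment between
distinct points of `L` lying in the frontier of the convex hull of `L` whose
relative interior contains no point of `L`. -/
def IsEdgeOf (L : Set Pt) (u v : Pt) : Prop :=
  u ∈ L ∧ v ∈ L ∧ u ≠ v ∧ segment ℝ u v ⊆ frontier (convexHull ℝ L) ∧
    openSegment ℝ u v ∩ L = ∅

/-- `H` is the open half-plane bounded by the line through the edge `u v` of `B`
that contains no point of `B` (the half-plane `b⁺`). -/
def IsPosSide (B : Set Pt) (u v : Pt) (H : Set Pt) : Prop :=
  (H = sidePos u v ∨ H = sideNeg u v) ∧ H ∩ B = ∅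

/-- `P` minus its first `n` convex layers. -/
def layerRest (P : Set Pt) : ℕ → Set Pt
  | 0 => P
  | n + 1 => layerRest P n \ frontier (convexHull ℝ (layerRest P n))

/-- The `i`-th convex layer of `P` (1-based). -/
def cLayer (P : Set Pt) (i : ℕ) : Set Pt :=
  layerRest P (i - 1) ∩ frontier (convexHull ℝ (layerRest P (i - 1)))

/-- `A` is a hull-minimal weakly convex `m`-gon in `P`. -/
def HullMinimalWeakGon (P A : Set Pt) (m : ℕ) : Prop :=
  A ⊆ P ∧ A.ncard = m ∧ WeaklyConvexPos A ∧
  ∀ A' ⊆ P, A'.Finite → m ≤ A'.ncard → WeaklyConvexPos A' →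
    ¬ convexHull ℝ A' ⊂ convexHull ℝ A

/-- The open triangle with corners `x`, `y`, `z`. -/
def openTriangle (x y z : Pt) : Set Pt := interior (convexHull ℝ {x, y, z})

/-- With respect to the fixed point `z`, the edge `x y` of the `i`-th convex
layer of `P` is empty: the open triangle `Δ(x,y,z)` contains no point of the
`(i+1)`-st layer. -/
def IsEmptyEdge (P : Set Pt) (z : Pt) (i : ℕ) (x y : Pt) : Prop :=
  IsEdgeOf (cLayer P i) x y ∧ openTriangle x y z ∩ cLayer P (i + 1) = ∅

/-- `y` is the point of `L` immediately clockwise (as seen from the interior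
point `z`) from the point `x` of the frontier of `conv L`. -/
def IsNextCW (z : Pt) (L : Set Pt) (x y : Pt) : Prop :=
  y ∈ L ∧ y ≠ x ∧ x ∈ frontier (convexHull ℝ L) ∧
  segment ℝ x y ⊆ frontier (convexHull ℝ L) ∧
  openSegment ℝ x y ∩ L = ∅ ∧ det2 (x - z) (y - z) < 0

/-- `y` is the point of `L` immediately anticlockwise (as seen from the interior
point `z`) from the point `x` of the frontier of `conv L`. -/
def IsNextACW (z : Pt) (L : Set Pt) (x y : Pt) : Prop :=
  y ∈ L ∧ y ≠ x ∧ x ∈ frontier (convexHull ℝ L) ∧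
  segment ℝ x y ⊆ frontier (convexHull ℝ L) ∧
  openSegment ℝ x y ∩ L = ∅ ∧ 0 < det2 (x - z) (y - z)

/-- `x` is the point of `conv L ∩ [v,z]` closest to `v`. -/
def ClosestOnSeg (L : Set Pt) (v z x : Pt) : Prop :=
  x ∈ convexHull ℝ L ∩ segment ℝ v z ∧
  ∀ w ∈ convexHull ℝ L ∩ segment ℝ v z, dist v x ≤ dist v w

/-- `q` is the right child of the point `v` of the `i`-th convex layer of `P`
(with respect to the fixed point `z`). -/
def IsRightChild (P : Set Pt) (z : Pt) (i : ℕ) (v q : Pt) : Prop :=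
  v ∈ cLayer P i ∧
  ∃ x, ClosestOnSeg (cLayer P (i + 1)) v z x ∧ IsNextCW z (cLayer P (i + 1)) x q

/-- `q` is the left child of the point `v` of the `i`-th convex layer of `P`
(with respect to the fixed point `z`). -/
def IsLeftChild (P : Set Pt) (z : Pt) (i : ℕ) (v q : Pt) : Prop :=
  v ∈ cLayer P i ∧
  ∃ x, ClosestOnSeg (cLayer P (i + 1)) v z x ∧ IsNextACW z (cLayer P (i + 1)) x q

/-- `c 0, …, c (t-1)` is a right chain starting in layer `s`. -/
def IsRightChain (P : Set Pt) (z : Pt) (s t : ℕ) (c : ℕ → Pt) : Prop :=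
  (∀ i, i < t → c i ∈ cLayer P (s + i)) ∧
  ∀ i, i + 1 < t → IsRightChild P z (s + i) (c i) (c (i + 1))

/-- `c 0, …, c (t-1)` is a left chain starting in layer `s`. -/
def IsLeftChain (P : Set Pt) (z : Pt) (s t : ℕ) (c : ℕ → Pt) : Prop :=
  (∀ i, i < t → c i ∈ cLayer P (s + i)) ∧
  ∀ i, i + 1 < t → IsLeftChild P z (s + i) (c i) (c (i + 1))

/-- The ray starting at `z` with direction `d`. -/
def Ray (z d : Pt) : Set Pt := {p | ∃ t : ℝ, 0 ≤ t ∧ p = z + t • d}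

/-- The chain `c 0, …, c (t-1)` wraps around `z`: every ray starting at `z`
meets the union of the edges of the chain at least twice. -/
def WrapsAround (z : Pt) (t : ℕ) (c : ℕ → Pt) : Prop :=
  ∀ d : Pt, d ≠ 0 → ∃ i j : ℕ, i + 1 < t ∧ j + 1 < t ∧ i ≠ j ∧
    (Ray z d ∩ segment ℝ (c i) (c (i + 1))).Nonempty ∧
    (Ray z d ∩ segment ℝ (c j) (c (j + 1))).Nonempty

/-- The (open) 4-sector of a strictly convex quadrilateral `p₁ p₂ p₃ p₄`:
the set of points `q` such that `q, p₁, p₂, p₃, p₄` are five points in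
strictly convex position in this cyclic order. -/
def Sector (p₁ p₂ p₃ p₄ : Pt) : Set Pt := {q | StrictConvexCyclic [q, p₁, p₂, p₃, p₄]}

/-- The closed 4-sector of a strictly convex quadrilateral. -/
def ClosedSector (p₁ p₂ p₃ p₄ : Pt) : Set Pt := closure (Sector p₁ p₂ p₃ p₄)

theorem Collinear.injOn_fst_or_injOn_snd {k : Type*} [Field k] {S : Set (k × k)}
    (hS : Collinear k S) : S.InjOn Prod.fst ∨ S.InjOn Prod.snd := by
  obtain ⟨p₀, v, hv⟩ := (collinear_iff_exists_forall_eq_smul_vadd S).mp hS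
  by_cases hv₁ : v.1 = 0
  · right
    intro p hp q hq h₂
    obtain ⟨r, rfl⟩ := hv p hp
    obtain ⟨s, rfl⟩ := hv q hq
    exact Prod.ext (by simp [hv₁]) h₂
  · left
    intro p hp q hq h₁
    obtain ⟨r, rfl⟩ := hv p hp
    obtain ⟨s, rfl⟩ := hv q hq
    have : r = s := mul_right_cancel₀ hv₁ (by simpa using h₁)
    rw [this]

theorem eq_of_midpoint_mem_extremePoints {E : Type*} [AddCommGroup E] [Module ℝ E]
    {C : Set E} {p q : E} (hp : p ∈ C) (hq : q ∈ C)
    (hm : midpoint ℝ p q ∈ C.extremePoints ℝ) : p = q := by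
  obtain ⟨hpm, hqm⟩ := (mem_extremePoints.1 hm).2 p hp q hq (midpoint_mem_openSegment p q)
  exact hpm.trans hqm.symm

theorem not_hasEmptyPentagon_of_exists_midpoint {P : Set Pt}
    (h : ∀ X ⊆ P, X.ncard = 5 → ∃ p ∈ X, ∃ q ∈ X, p ≠ q ∧ midpoint ℝ p q ∈ P) :
    ¬ HasEmptyPentagon P := by
  rintro ⟨X, hXP, hX5, hXconv, hXempty⟩
  obtain ⟨p, hp, q, hq, hpq, hm⟩ := h X hXP hX5
  have hp' := subset_convexHull ℝ X hp
  have hq' := subset_convexHull ℝ X hq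
  have hmX : midpoint ℝ p q ∈ X := by
    rw [← hXempty]
    exact ⟨hm, (convex_convexHull ℝ X).midpoint_mem hp' hq'⟩
  exact hpq (eq_of_midpoint_mem_extremePoints hp' hq' (hXconv _ hmX))

def grid (n : ℕ) : Set Pt := Prod.map Nat.cast Nat.cast '' Icc 1 n ×ˢ Icc 1 n

theorem ncard_grid (n : ℕ) : (grid n).ncard = n ^ 2 := by
  rw [grid, ncard_image_of_injective _ (Nat.cast_injective.prodMap Nat.cast_injective),
    ncard_prod, ncard_Icc_nat, Nat.add_sub_cancel, sq]

theorem ncard_le_of_collinear_subset_grid {n : ℕ} {S : Set Pt} (hSG : S ⊆ grid n)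
    (hS : Collinear ℝ S) : S.ncard ≤ n := by
  have of_injOn : ∀ π : Pt → ℝ, S.InjOn π → π '' grid n ⊆ Nat.cast '' Icc 1 n →
      S.ncard ≤ n := by
    intro π hπ himg
    calc S.ncard = (π '' S).ncard := hπ.ncard_image.symm
      _ ≤ (Nat.cast '' Icc 1 n : Set ℝ).ncard :=
        ncard_le_ncard ((image_mono hSG).trans himg) ((finite_Icc 1 n).image _)
      _ = n := by
        rw [ncard_image_of_injective _ Nat.cast_injective, ncard_Icc_nat, Nat.add_sub_cancel]
  rcases hS.injOn_fst_or_injOn_snd with h | h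
  · refine of_injOn _ h ?_
    rintro _ ⟨_, ⟨a, ⟨ha, -⟩, rfl⟩, rfl⟩
    exact ⟨a.1, ha, rfl⟩
  · refine of_injOn _ h ?_
    rintro _ ⟨_, ⟨a, ⟨-, ha⟩, rfl⟩, rfl⟩
    exact ⟨a.2, ha, rfl⟩

theorem midpoint_natCast_of_mod_two_eq {a b : ℕ} (h : a % 2 = b % 2) :
    midpoint ℝ (a : ℝ) (b : ℝ) = ((a + b) / 2 : ℕ) := by
  have hdvd : ((a + b) / 2 * 2 : ℕ) = a + b := Nat.div_mul_cancel (by omega)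
  rw [midpoint_eq_smul_add, invOf_eq_inv, smul_eq_mul, eq_comm,
    eq_inv_mul_iff_mul_eq₀ two_ne_zero, mul_comm]
  exact_mod_cast hdvd

theorem midpoint_mem_grid {n : ℕ} {a b : ℕ × ℕ} (ha : a ∈ Icc 1 n ×ˢ Icc 1 n)
    (hb : b ∈ Icc 1 n ×ˢ Icc 1 n) (h₁ : a.1 % 2 = b.1 % 2) (h₂ : a.2 % 2 = b.2 % 2) :
    midpoint ℝ (Prod.map Nat.cast Nat.cast a : Pt) (Prod.map Nat.cast Nat.cast b) ∈ grid n := by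
  simp only [mem_prod, mem_Icc] at ha hb
  refine ⟨((a.1 + b.1) / 2, (a.2 + b.2) / 2), ⟨⟨by omega, by omega⟩, ⟨by omega, by omega⟩⟩, ?_⟩
  refine Prod.ext ?_ ?_
  · simp [← midpoint_natCast_of_mod_two_eq h₁, midpoint_eq_smul_add, mul_add]
  · simp [← midpoint_natCast_of_mod_two_eq h₂, midpoint_eq_smul_add, mul_add]

theorem exists_ne_midpoint_mem_grid {n : ℕ} {X : Set Pt} (hXG : X ⊆ grid n)
    (hX : 4 < X.ncard) : ∃ p ∈ X, ∃ q ∈ X, p ≠ q ∧ midpoint ℝ p q ∈ grid n := by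
  let parity : Pt → ℕ × ℕ := fun p => (⌊p.1⌋₊ % 2, ⌊p.2⌋₊ % 2)
  have hparity : ∀ p ∈ X, parity p ∈ Iio 2 ×ˢ Iio 2 :=
    fun p _ => ⟨Nat.mod_lt _ two_pos, Nat.mod_lt _ two_pos⟩
  obtain ⟨p, hp, q, hq, hpq, hpar⟩ :=
    exists_ne_map_eq_of_ncard_lt_of_maps_to (by simpa [ncard_prod] using hX) hparity
  refine ⟨p, hp, q, hq, hpq, ?_⟩
  obtain ⟨a, ha, rfl⟩ := hXG hp
  obtain ⟨b, hb, rfl⟩ := hXG hq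
  simp only [parity, Prod.map_fst, Prod.map_snd, Nat.floor_natCast, Prod.mk.injEq] at hpar
  exact midpoint_mem_grid ha hb hpar.1 hpar.2

theorem not_hasEmptyPentagon_grid (n : ℕ) : ¬ HasEmptyPentagon (grid n) :=
  not_hasEmptyPentagon_of_exists_midpoint fun _ hXG hX5 =>
    exists_ne_midpoint_mem_grid hXG (by omega)

theorem not_hasCollinearPoints_grid (n : ℕ) : ¬ HasCollinearPoints (grid n) (n + 1) := by
  rintro ⟨S, hSG, -, hS, hcol⟩
  have := ncard_le_of_collinear_subset_grid hSG hcol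
  omega

/-- For `ℓ ≥ 2`, the `(ℓ-1) × (ℓ-1)` grid has `(ℓ-1)²` points
and contains neither `ℓ` collinear points nor an empty pentagon. -/
theorem statement1 (ℓ : ℕ) (hℓ : 2 ≤ ℓ) (G : Set Pt)
    (hG : G = {p : Pt | ∃ i j : ℕ, 1 ≤ i ∧ i ≤ ℓ - 1 ∧ 1 ≤ j ∧ j ≤ ℓ - 1 ∧
      p = ((i : ℝ), (j : ℝ))}) :
    G.ncard = (ℓ - 1) ^ 2 ∧ ¬ HasCollinearPoints G ℓ ∧ ¬ HasEmptyPentagon G := by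
  obtain ⟨n, rfl⟩ : ∃ n, ℓ = n + 1 := ⟨ℓ - 1, by omega⟩
  have hG : G = grid n := by
    rw [hG, Nat.add_sub_cancel]
    ext p
    constructor
    · rintro ⟨i, j, hi, hi', hj, hj', rfl⟩
      exact ⟨(i, j), ⟨⟨hi, hi'⟩, hj, hj'⟩, rfl⟩
    · rintro ⟨⟨i, j⟩, ⟨⟨hi, hi'⟩, hj, hj'⟩, rfl⟩
      exact ⟨i, j, hi, hi', hj, hj', rfl⟩
  subst hG
  exact ⟨ncard_grid n, not_hasCollinearPoints_grid n, not_hasEmptyPentagon_grid n⟩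
end

section
/- Let P be a finite set of points in ℝ² that contains no empty pentagon, and let p₁p₂p₃p₄ be an empty quadrilateral in P, i.e., {p₁,p₂,p₃,p₄} ⊆ P is a set of 4 points in strictly convex position appearing in this cyclic order on their convex hull with P ∩ conv{p₁,p₂,p₃,p₄} = {p₁,p₂,p₃,p₄}. Then no point of P lies in the 4-sector S(p₁,p₂,p₃,p₄); that is, there is no q ∈ P such that q, p₁, p₂, p₃, p₄ are the vertices, in this cyclic order, of a strictly convex pentagon. -/
/-!
Suppose some point of `P` lies in the sector, and take such a point `q` nearest to the line
`p₄ p₁`. Then `q p₁ p₂ p₃ p₄` is an empty pentagon: a point of `P` inside it but outside the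
empty quadrilateral lies beyond the line `p₄ p₁`, hence in the sector, and is nearer to that line
than `q` unless it is `q`. Everything is expressed through orientations (signs of 2×2
determinants); for a convex quadrilateral, membership in the sector amounts to four of them.
-/

open Set

/-- Twice the signed area of the triangle `a b c`, as an affine function of `c`. -/
def orient (a b : Pt) : Pt →ᵃ[ℝ] ℝ where
  toFun c := det2 (b - a) (c - a)
  linear :=
    { toFun := det2 (b - a)
      map_add' := fun u v => by simp only [det2, Prod.fst_add, Prod.snd_add]; ring
      map_smul' := fun r u => by
        simp only [det2, Prod.smul_fst, Prod.smul_snd, smul_eq_mul, RingHom.id_apply]; ring }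
  map_vadd' p v := by
    simp only [det2, LinearMap.coe_mk, AddHom.coe_mk, vadd_eq_add, Prod.fst_add, Prod.snd_add,
      Prod.fst_sub, Prod.snd_sub]
    ring

lemma orient_apply (a b c : Pt) : orient a b c = det2 (b - a) (c - a) := rfl

lemma orient_rotate (a b c : Pt) : orient a b c = orient b c a := by
  simp only [orient_apply, det2, Prod.fst_sub, Prod.snd_sub]; ring

lemma orient_swap (a b c : Pt) : orient a c b = -orient a b c := by
  simp only [orient_apply, det2, Prod.fst_sub, Prod.snd_sub]; ring

@[simp] lemma orient_self_left (a b : Pt) : orient a b a = 0 := by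
  simp [orient_apply, det2]

@[simp] lemma orient_self_right (a b : Pt) : orient a b b = 0 := by
  simp only [orient_apply, det2]; ring

/-- The Grassmann–Plücker relation for the vectors from `a` to `b`, `c`, `d`, `e`. -/
lemma orient_mul_orient (a b c d e : Pt) :
    orient a b c * orient a d e = orient a b d * orient a c e - orient a b e * orient a c d := by
  simp only [orient_apply, det2, Prod.fst_sub, Prod.snd_sub]; ring

/-- The orientations of `p` against the sides of `a b c` are its unnormalised barycentric
coordinates. -/
lemma orient_smul_eq (a b c p : Pt) :
    orient a b c • p = orient b c p • a + orient c a p • b + orient a b p • c := by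
  ext <;> simp only [orient_apply, det2, Prod.fst_add, Prod.snd_add, Prod.smul_fst,
    Prod.smul_snd, smul_eq_mul, Prod.fst_sub, Prod.snd_sub] <;> ring

lemma orient_add_orient_add_orient (a b c p : Pt) :
    orient b c p + orient c a p + orient a b p = orient a b c := by
  simp only [orient_apply, det2, Prod.fst_sub, Prod.snd_sub]; ring

lemma orient_nonneg_of_mem_convexHull {a b p : Pt} {s : Set Pt}
    (hs : ∀ y ∈ s, 0 ≤ orient a b y) (hp : p ∈ convexHull ℝ s) : 0 ≤ orient a b p :=
  convexHull_min hs ((convex_Ici 0).affine_preimage (orient a b)) hp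

lemma mem_convexHull_triangle {a b c p : Pt} (habc : 0 < orient a b c)
    (ha : 0 ≤ orient b c p) (hb : 0 ≤ orient c a p) (hc : 0 ≤ orient a b p) :
    p ∈ convexHull ℝ {a, b, c} := by
  have hmem : _ ∈ convexHull ℝ ({a, b, c} : Set Pt) :=
    Finset.centerMass_mem_convexHull (Finset.univ : Finset (Fin 3))
      (w := ![orient b c p, orient c a p, orient a b p]) (z := ![a, b, c])
      (fun i _ => by fin_cases i <;> assumption)
      (by simpa [Fin.sum_univ_three, orient_add_orient_add_orient] using habc)
      (fun i _ => by fin_cases i <;> simp)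
  convert hmem using 1
  rw [Finset.centerMass, Fin.sum_univ_three, Fin.sum_univ_three]
  simp only [Matrix.cons_val_zero, Matrix.cons_val_one, Matrix.cons_val_two, Matrix.head_cons,
    Matrix.tail_cons]
  rw [orient_add_orient_add_orient, ← orient_smul_eq, smul_smul, inv_mul_cancel₀ habc.ne',
    one_smul]

lemma mem_convexHull_quadrilateral_iff {a b c d p : Pt} (habc : 0 < orient a b c)
    (habd : 0 < orient a b d) (hacd : 0 < orient a c d) (hbcd : 0 < orient b c d) :
    p ∈ convexHull ℝ {a, b, c, d} ↔
      0 ≤ orient a b p ∧ 0 ≤ orient b c p ∧ 0 ≤ orient c d p ∧ 0 ≤ orient d a p := by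
  refine ⟨fun hp => ⟨?_, ?_, ?_, ?_⟩, fun ⟨hab, hbc, hcd, hda⟩ => ?_⟩ <;>
    try refine orient_nonneg_of_mem_convexHull ?_ hp <;>
    simp only [forall_mem_insert, mem_singleton_iff, forall_eq, orient_self_left,
      orient_self_right]
  · exact ⟨le_rfl, le_rfl, habc.le, habd.le⟩
  · exact ⟨(orient_rotate a b c ▸ habc).le, le_rfl, le_rfl, hbcd.le⟩
  · exact ⟨(orient_rotate a c d ▸ hacd).le, (orient_rotate b c d ▸ hbcd).le, le_rfl, le_rfl⟩
  · refine ⟨le_rfl, ?_, ?_, le_rfl⟩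
    · linarith [orient_rotate a b d, orient_rotate b d a]
    · linarith [orient_rotate a c d, orient_rotate c d a]
  rcases le_total 0 (orient a c p) with hac | hca
  · refine convexHull_mono (s := {a, c, d}) (by intro x; simp only [mem_insert_iff]; tauto) ?_
    exact mem_convexHull_triangle hacd hcd hda hac
  · refine convexHull_mono (s := {a, b, c}) (by intro x; simp only [mem_insert_iff]; tauto) ?_
    refine mem_convexHull_triangle habc hbc ?_ hab
    rw [orient_rotate, orient_swap]; linarith

lemma mem_extremePoints_convexHull_of_lt {E : Type*} [AddCommGroup E] [Module ℝ E]
    {s : Set E} {x : E} (g : E →ᵃ[ℝ] ℝ) (hx : x ∈ s) (hg : ∀ y ∈ s, y ≠ x → g x < g y) :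
    x ∈ (convexHull ℝ s).extremePoints ℝ := by
  have hlt : ∀ y ∈ convexHull ℝ s, y ≠ x → g x < g y := by
    intro y hy hyx
    rcases (s \ {x}).eq_empty_or_nonempty with hs | hs
    · rw [sdiff_eq_empty] at hs
      rw [hs.antisymm (singleton_subset_iff.2 hx), convexHull_singleton] at hy
      exact absurd hy hyx
    rw [← insert_eq_of_mem hx, ← insert_sdiff_singleton, convexHull_insert hs, mem_convexJoin] at hy
    obtain ⟨x', hx', z, hz, t₁, t₂, ht₁, ht₂, ht, rfl⟩ := hy
    rw [mem_singleton_iff] at hx'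
    subst x'
    have hgz : g x < g z := convexHull_min (fun y hy => hg y hy.1 hy.2)
      ((convex_Ioi (g x)).affine_preimage g) hz
    obtain rfl : t₁ = 1 - t₂ := by linarith
    have ht₂ : 0 < t₂ := ht₂.lt_of_ne fun h => hyx (by simp [← h])
    rw [Convex.combo_affine_apply ht, smul_eq_mul, smul_eq_mul]
    nlinarith [mul_pos ht₂ (sub_pos.2 hgz)]
  rw [(convex_convexHull ℝ s).mem_extremePoints_iff_convex_sdiff]
  refine ⟨subset_convexHull ℝ s hx, ?_⟩
  have : convexHull ℝ s \ {x} = convexHull ℝ s ∩ g ⁻¹' Ioi (g x) := by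
    ext y
    exact ⟨fun hy => ⟨hy.1, hlt y hy.1 hy.2⟩, fun hy => ⟨hy.1, fun h => by
      rw [mem_singleton_iff.1 h] at hy; exact lt_irrefl (g x) hy.2⟩⟩
  rw [this]
  exact (convex_convexHull ℝ s).inter ((convex_Ioi _).affine_preimage g)

lemma add_one_mod_eq_ite {i n : ℕ} (h : i < n) :
    (i + 1) % n = if i + 1 = n then 0 else i + 1 := by
  split_ifs with hn
  · simp [hn]
  · exact Nat.mod_eq_of_lt (by omega)

lemma strictConvexCCWList_iff {l : List Pt} :
    StrictConvexCCWList l ↔ 3 ≤ l.length ∧ ∀ i j (hi : i < l.length) (hj : j < l.length),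
      j ≠ i → j ≠ (i + 1) % l.length →
        0 < orient l[i] (l[(i + 1) % l.length]'(Nat.mod_lt _ (by omega))) l[j] := by
  refine ⟨fun ⟨h3, h⟩ => ⟨h3, fun i j hi hj hji hj' => ?_⟩,
    fun ⟨h3, h⟩ => ⟨h3, fun i j hji hj' => h i j i.2 j.2 (Fin.val_ne_of_ne hji) hj'⟩⟩
  exact h ⟨i, hi⟩ ⟨j, hj⟩ (Fin.ne_of_val_ne hji) hj'

namespace StrictConvexCCWList

variable {l : List Pt}

lemma orient_pos (h : StrictConvexCCWList l) {i j : ℕ} (hi : i < l.length) (hj : j < l.length)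
    (hji : j ≠ i) (hj' : j ≠ (i + 1) % l.length) :
    0 < orient l[i] (l[(i + 1) % l.length]'(Nat.mod_lt _ (by omega))) l[j] :=
  (strictConvexCCWList_iff.1 h).2 i j hi hj hji hj'

lemma rotate (h : StrictConvexCCWList l) (k : ℕ) : StrictConvexCCWList (l.rotate k) := by
  obtain ⟨h3, -⟩ := strictConvexCCWList_iff.1 h
  have hn0 : 0 < l.length := by omega
  have cancel : ∀ {i j : ℕ}, i < l.length → j < l.length →
      (j + k) % l.length = (i + k) % l.length → j = i := fun hi hj hji =>
    (Nat.mod_eq_of_lt hj).symm.trans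
      (Eq.trans (Nat.ModEq.add_right_cancel' k hji) (Nat.mod_eq_of_lt hi))
  refine strictConvexCCWList_iff.2 ⟨by simpa using h3, fun i j hi hj hji hj' => ?_⟩
  simp only [List.length_rotate] at hi hj hj'
  have hnext : ((i + 1) % l.length + k) % l.length = ((i + k) % l.length + 1) % l.length := by
    rw [Nat.mod_add_mod, Nat.mod_add_mod, Nat.add_right_comm]
  simp only [List.getElem_rotate, List.length_rotate, hnext]
  refine h.orient_pos _ _ (fun hij => hji (cancel hi hj hij)) (fun hij => hj' ?_)
  refine cancel (Nat.mod_lt _ hn0) hj ?_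
  rw [hij, hnext]

/-- The witness is `orient u v + orient v w`, for the neighbours `u`, `w` of the vertex `v`. -/
lemma exists_affine_lt (h : StrictConvexCCWList l) {i : ℕ} (hi : i < l.length) :
    ∃ g : Pt →ᵃ[ℝ] ℝ, ∀ j (hj : j < l.length), j ≠ i → g l[i] < g l[j] := by
  obtain ⟨h3, -⟩ := strictConvexCCWList_iff.1 h
  obtain ⟨k, hkn, hki, hik⟩ : ∃ k < l.length, (k + 1) % l.length = i ∧ k ≠ (i + 1) % l.length := by
    refine ⟨if i = 0 then l.length - 1 else i - 1, by split_ifs <;> omega, ?_, ?_⟩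
    · rw [add_one_mod_eq_ite (by split_ifs <;> omega)]; split_ifs <;> omega
    · rw [add_one_mod_eq_ite hi]; split_ifs <;> omega
  have hnext : (i + 1) % l.length < l.length := Nat.mod_lt _ (by omega)
  refine ⟨orient l[k] l[i] + orient l[i] l[(i + 1) % l.length], fun j hj hji => ?_⟩
  have hleft : j ≠ k → 0 < orient l[k] l[i] l[j] := fun hjk => by
    simpa only [hki] using h.orient_pos hkn hj hjk (by rw [hki]; exact hji)
  have hright : j ≠ (i + 1) % l.length → 0 < orient l[i] l[(i + 1) % l.length] l[j] :=
    h.orient_pos hi hj hji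
  simp only [AffineMap.coe_add, Pi.add_apply, orient_self_right, orient_self_left, add_zero]
  by_cases hjk : j = k
  · subst hjk
    simpa using hright hik
  by_cases hj' : j = (i + 1) % l.length
  · subst hj'
    simpa using hleft hjk
  · linarith [hleft hjk, hright hj']

lemma nodup (h : StrictConvexCCWList l) : l.Nodup := by
  refine List.nodup_iff_injective_getElem.2 fun i j hij => Fin.ext ?_
  by_contra hne
  obtain ⟨g, hg⟩ := h.exists_affine_lt i.2
  exact (hg j j.2 (Ne.symm hne)).ne (congrArg g hij)

lemma ncard_eq (h : StrictConvexCCWList l) : {x | x ∈ l}.ncard = l.length := by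
  classical
  rw [← List.coe_toFinset, Set.ncard_coe_finset, List.toFinset_card_of_nodup h.nodup]

lemma strictlyConvexPos (h : StrictConvexCCWList l) : StrictlyConvexPos {x | x ∈ l} := by
  intro x hx
  obtain ⟨i, hi, rfl⟩ := List.getElem_of_mem hx
  obtain ⟨g, hg⟩ := h.exists_affine_lt hi
  refine mem_extremePoints_convexHull_of_lt g hx fun y hy hyx => ?_
  obtain ⟨j, hj, rfl⟩ := List.getElem_of_mem hy
  exact hg j hj fun hji => hyx (by simp only [hji])

end StrictConvexCCWList

lemma strictConvexCCWList_pentagon_iff {q a b c d : Pt} :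
    StrictConvexCCWList [q, a, b, c, d] ↔
      (0 < orient a b c ∧ 0 < orient a b d ∧ 0 < orient a c d ∧ 0 < orient b c d) ∧
      (0 < orient a b q ∧ 0 < orient b c q ∧ 0 < orient c d q ∧ orient d a q < 0) := by
  constructor
  · intro h
    have side : ∀ i j (hi : i < 5) (hj : j < 5), j ≠ i → j ≠ (i + 1) % 5 →
        (0 : ℝ) < orient [q, a, b, c, d][i] ([q, a, b, c, d][(i + 1) % 5]'(by simp; omega))
          [q, a, b, c, d][j] :=
      fun i j hi hj => h.orient_pos hi hj
    have hcda := side 3 1 (by norm_num) (by norm_num) (by norm_num) (by norm_num)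
    have hdqa := side 4 1 (by norm_num) (by norm_num) (by norm_num) (by norm_num)
    refine ⟨⟨side 1 3 (by norm_num) (by norm_num) (by norm_num) (by norm_num),
      side 1 4 (by norm_num) (by norm_num) (by norm_num) (by norm_num), ?_,
      side 2 4 (by norm_num) (by norm_num) (by norm_num) (by norm_num)⟩,
      side 1 0 (by norm_num) (by norm_num) (by norm_num) (by norm_num),
      side 2 0 (by norm_num) (by norm_num) (by norm_num) (by norm_num),
      side 3 0 (by norm_num) (by norm_num) (by norm_num) (by norm_num), ?_⟩
    · rwa [orient_rotate]
    · rw [orient_swap]; exact neg_neg_of_pos hdqa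
  · rintro ⟨⟨habc, habd, hacd, hbcd⟩, habq, hbcq, hcdq, hdaq⟩
    have hadq : 0 < orient a d q := by
      linarith [orient_rotate d a q, orient_swap a d q]
    have hacq : 0 < orient a c q := by
      have := orient_mul_orient a b d c q
      nlinarith [orient_swap a c d, mul_pos habc hadq, mul_pos habq hacd]
    have hdqb : 0 < orient d q b := by
      have := orient_mul_orient d c a b q
      have hdca : orient d c a < 0 := by linarith [orient_rotate a d c, orient_swap a c d]
      have hdcb : orient d c b < 0 := by linarith [orient_rotate b d c, orient_swap b c d]
      have hdcq : orient d c q < 0 := by linarith [orient_rotate c d q, orient_swap d c q]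
      have hdab : 0 < orient d a b := by linarith [orient_rotate a b d, orient_rotate b d a]
      nlinarith [orient_swap d b q, mul_pos (neg_pos.2 hdcb) (neg_pos.2 hdaq),
        mul_pos (neg_pos.2 hdcq) hdab]
    have hqab : 0 < orient q a b := by rwa [orient_rotate]
    have hqac : 0 < orient q a c := by rwa [orient_rotate]
    have hqad : 0 < orient q a d := by rwa [orient_rotate]
    have hbca : 0 < orient b c a := by rwa [← orient_rotate]
    have hcda : 0 < orient c d a := by rwa [← orient_rotate]
    have hcdb : 0 < orient c d b := by rwa [← orient_rotate]
    have hdqa : 0 < orient d q a := by rwa [orient_rotate, orient_rotate]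
    have hdqc : 0 < orient d q c := by rwa [← orient_rotate]
    refine strictConvexCCWList_iff.2 ⟨by simp, fun i j hi hj hji hj' => ?_⟩
    simp only [List.length_cons, List.length_nil] at hi hj hj'
    interval_cases i <;> interval_cases j <;> simp at hji hj' ⊢ <;> assumption

lemma inter_convexHull_pentagon_eq {P : Set Pt} {q a b c d : Pt}
    (hsub : {a, b, c, d} ⊆ P) (hempty : P ∩ convexHull ℝ {a, b, c, d} = {a, b, c, d})
    (hqP : q ∈ P) (hq : StrictConvexCCWList [q, a, b, c, d])
    (hmax : ∀ p ∈ P, StrictConvexCCWList [p, a, b, c, d] → orient d a p ≤ orient d a q) :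
    P ∩ convexHull ℝ {q, a, b, c, d} = {q, a, b, c, d} := by
  obtain ⟨hquad, habq, hbcq, hcdq, hdaq⟩ := strictConvexCCWList_pentagon_iff.1 hq
  obtain ⟨habc, habd, hacd, hbcd⟩ := hquad
  refine Subset.antisymm ?_ fun x hx => ⟨insert_subset hqP hsub hx, subset_convexHull ℝ _ hx⟩
  rintro p ⟨hpP, hp⟩
  rw [convexHull_insert (insert_nonempty _ _), mem_convexJoin] at hp
  obtain ⟨q', hq', r, hr, s, t, hs, ht, hst, rfl⟩ := hp
  rw [mem_singleton_iff] at hq'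
  subst q'
  obtain ⟨hr_ab, hr_bc, hr_cd, hr_da⟩ :=
    (mem_convexHull_quadrilateral_iff habc habd hacd hbcd).1 hr
  have combo : ∀ u v, orient u v (s • q + t • r) = s * orient u v q + t * orient u v r :=
    fun u v => Convex.combo_affine_apply hst
  by_cases hda : 0 ≤ orient d a (s • q + t • r)
  · refine mem_insert_of_mem _ (hempty ▸ ⟨hpP,
      (mem_convexHull_quadrilateral_iff habc habd hacd hbcd).2 ⟨?_, ?_, ?_, hda⟩⟩)
    · rw [combo]; nlinarith [mul_nonneg hs habq.le, mul_nonneg ht hr_ab]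
    · rw [combo]; nlinarith [mul_nonneg hs hbcq.le, mul_nonneg ht hr_bc]
    · rw [combo]; nlinarith [mul_nonneg hs hcdq.le, mul_nonneg ht hr_cd]
  push Not at hda
  rw [combo] at hda
  have hs0 : 0 < s := hs.lt_of_ne fun h => by subst h; nlinarith [mul_nonneg ht hr_da]
  have hsec : StrictConvexCCWList [s • q + t • r, a, b, c, d] := by
    refine strictConvexCCWList_pentagon_iff.2 ⟨⟨habc, habd, hacd, hbcd⟩, ?_, ?_, ?_, ?_⟩ <;>
      rw [combo]
    · nlinarith [mul_pos hs0 habq, mul_nonneg ht hr_ab]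
    · nlinarith [mul_pos hs0 hbcq, mul_nonneg ht hr_bc]
    · nlinarith [mul_pos hs0 hcdq, mul_nonneg ht hr_cd]
    · exact hda
  have hle := hmax _ hpP hsec
  rw [combo] at hle
  obtain rfl : t = 0 := by
    obtain rfl : s = 1 - t := by linarith
    nlinarith [mul_nonneg ht hr_da]
  obtain rfl : s = 1 := by linarith
  simp

theorem hasEmptyPentagon_of_strictConvexCCWList {P : Set Pt} (hP : P.Finite) {q a b c d : Pt}
    (hsub : {a, b, c, d} ⊆ P) (hempty : P ∩ convexHull ℝ {a, b, c, d} = {a, b, c, d})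
    (hqP : q ∈ P) (hq : StrictConvexCCWList [q, a, b, c, d]) : HasEmptyPentagon P := by
  obtain ⟨q₀, ⟨hq₀P, hq₀⟩, hmax⟩ := Set.exists_max_image
    {p ∈ P | StrictConvexCCWList [p, a, b, c, d]} (orient d a) (hP.subset (sep_subset _ _))
    ⟨q, hqP, hq⟩
  have hX : ({q₀, a, b, c, d} : Set Pt) = {x | x ∈ [q₀, a, b, c, d]} := by ext; simp
  refine ⟨{q₀, a, b, c, d}, insert_subset hq₀P hsub, ?_, ?_,
    inter_convexHull_pentagon_eq hsub hempty hq₀P hq₀ fun p hp hpc => hmax p ⟨hp, hpc⟩⟩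
  · rw [hX, hq₀.ncard_eq]; rfl
  · rw [hX]; exact hq₀.strictlyConvexPos

theorem statement3_general (P : Set Pt) (hP : P.Finite) (hpent : ¬ HasEmptyPentagon P)
    (p₁ p₂ p₃ p₄ : Pt) (hsub : {p₁, p₂, p₃, p₄} ⊆ P)
    (hempty : P ∩ convexHull ℝ {p₁, p₂, p₃, p₄} = {p₁, p₂, p₃, p₄}) :
    ¬ ∃ q ∈ P, StrictConvexCyclic [q, p₁, p₂, p₃, p₄] := by
  rintro ⟨q, hqP, hccw | hcw⟩
  · exact hpent (hasEmptyPentagon_of_strictConvexCCWList hP hsub hempty hqP hccw)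
  · have hccw : StrictConvexCCWList [q, p₄, p₃, p₂, p₁] := hcw.rotate 4
    have hQ : ({p₄, p₃, p₂, p₁} : Set Pt) = {p₁, p₂, p₃, p₄} := by
      ext; simp only [mem_insert_iff, mem_singleton_iff]; tauto
    exact hpent (hasEmptyPentagon_of_strictConvexCCWList hP (hQ ▸ hsub) (hQ ▸ hempty) hqP hccw)

/-- If `P` has no empty pentagon and `p₁p₂p₃p₄` is an empty
quadrilateral in `P`, then no point of `P` lies in the 4-sector
`S(p₁,p₂,p₃,p₄)`. -/
theorem statement3 (P : Set Pt) (hP : P.Finite) (hpent : ¬ HasEmptyPentagon P)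
    (p₁ p₂ p₃ p₄ : Pt) (hsub : {p₁, p₂, p₃, p₄} ⊆ P)
    (hconv : StrictConvexCyclic [p₁, p₂, p₃, p₄])
    (hempty : P ∩ convexHull ℝ {p₁, p₂, p₃, p₄} = {p₁, p₂, p₃, p₄}) :
    ¬ ∃ q ∈ P, StrictConvexCyclic [q, p₁, p₂, p₃, p₄] :=
  statement3_general P hP hpent p₁ p₂ p₃ p₄ hsub hempty
end

section
/- Let P be a finite set of points in ℝ², let m ≥ 3, and let A ⊆ P be a hull-minimal weakly convex m-gon in P with P ⊆ conv(A), so that A is the first convex layer of P; let B be the second convex layer of P and assume B ≠ ∅. Then for every edge b of B, |A ∩ b⁺| > |B ∩ l(b)|. More generally, for any edges b₁, …, b_j of B, |A ∩ (b₁⁺ ∪ ⋯ ∪ b_j⁺)| > |B ∩ (l(b₁) ∪ ⋯ ∪ l(b_j))|. -/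
/-!
Suppose `|A ∩ ⋃ bᵢ⁺| ≤ |B ∩ ⋃ l(bᵢ)|` and trade the points of `A` beyond the lines for the
points of `B` on them: `A' = (A \ ⋃ bᵢ⁺) ∪ (B ∩ ⋃ l(bᵢ))`. Since `B` lies in the interior of
`conv A`, it is disjoint from `A`, so `|A'| ≥ m`. The hull of `A'` lies in `conv A` and in every
closed half-plane `ℝ² \ bᵢ⁺`; hence the points of `A'` coming from `A` stay on the frontier of
`conv A'`, and those coming from `B` lie on a supporting line `l(bᵢ)`, so `A'` is weakly convex.
Finally the endpoints of `b₁` are interior to `conv A`, so `b₁⁺` contains a point of `A`, which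
`conv A'` misses: `conv A' ⊊ conv A` contradicts hull-minimality.
-/

open Set

theorem ContinuousLinearMap.interior_setOf_le {E : Type*} [NormedAddCommGroup E]
    [NormedSpace ℝ E] [CompleteSpace E] {f : E →L[ℝ] ℝ} (hf : f ≠ 0) (c : ℝ) :
    interior {x | f x ≤ c} = {x | f x < c} := by
  have hsurj : Function.Surjective f :=
    LinearMap.surjective (f := (f : E →ₗ[ℝ] ℝ)) (by exact_mod_cast hf)
  have := f.interior_preimage hsurj (Iic c)
  rwa [interior_Iic] at this

theorem sdiff_frontier_convexHull_subset_interior {E : Type*} [AddCommGroup E] [Module ℝ E]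
    [TopologicalSpace E] (s : Set E) :
    s \ frontier (convexHull ℝ s) ⊆ interior (convexHull ℝ s) :=
  (sdiff_subset_sdiff_left (subset_convexHull ℝ s)).trans (self_sdiff_frontier _).subset

theorem inter_nonempty_of_mem_interior_convexHull {E : Type*} [AddCommGroup E] [Module ℝ E]
    [TopologicalSpace E] {A H L : Set E} (hH : Convex ℝ Hᶜ) (hLH : Disjoint L (interior Hᶜ))
    {b : E} (hbA : b ∈ interior (convexHull ℝ A)) (hbL : b ∈ L) : (A ∩ H).Nonempty := by
  by_contra! hAH
  have hAH' : convexHull ℝ A ⊆ Hᶜ :=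
    convexHull_min (fun a ha haH ↦ (eq_empty_iff_forall_notMem.mp hAH) a ⟨ha, haH⟩) hH
  exact hLH.notMem_of_mem_left hbL (interior_mono hAH' hbA)

def det2CLM (w : Pt) : Pt →L[ℝ] ℝ :=
  w.1 • ContinuousLinearMap.snd ℝ ℝ ℝ - w.2 • ContinuousLinearMap.fst ℝ ℝ ℝ

theorem det2CLM_apply (w x : Pt) : det2CLM w x = det2 w x := by
  simp only [det2CLM, det2, sub_apply, smul_apply,
    ContinuousLinearMap.coe_fst', ContinuousLinearMap.coe_snd', smul_eq_mul]

theorem det2CLM_ne_zero {w : Pt} (hw : w ≠ 0) : det2CLM w ≠ 0 := by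
  intro h
  have h1 := congrArg (· (0, 1)) h
  have h2 := congrArg (· (1, 0)) h
  simp only [det2CLM_apply, det2, zero_apply] at h1 h2
  exact hw (Prod.ext (by simpa using h1) (by simpa using h2))

theorem exists_continuousLinearMap_compl_side {u v : Pt} {H : Set Pt} (huv : u ≠ v)
    (hH : H = sidePos u v ∨ H = sideNeg u v) :
    ∃ g : Pt →L[ℝ] ℝ, g ≠ 0 ∧ Hᶜ = {x | g x ≤ g u} ∧ lineThrough u v = {x | g x = g u} := by
  have hf := det2CLM_ne_zero (sub_ne_zero.mpr huv.symm)
  have hdet (x : Pt) : det2 (v - u) (x - u) = det2CLM (v - u) x - det2CLM (v - u) u := by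
    rw [← map_sub, det2CLM_apply]
  rcases hH with rfl | rfl
  · refine ⟨det2CLM (v - u), hf, ?_, ?_⟩ <;> ext x <;>
      simp [sidePos, lineThrough, hdet, sub_eq_zero]
  · refine ⟨-det2CLM (v - u), neg_ne_zero.mpr hf, ?_, ?_⟩ <;> ext x <;>
      simp [sideNeg, lineThrough, hdet, sub_eq_zero]

theorem convex_compl_side {u v : Pt} {H : Set Pt} (huv : u ≠ v)
    (hH : H = sidePos u v ∨ H = sideNeg u v) : Convex ℝ Hᶜ := by
  obtain ⟨g, -, hgH, -⟩ := exists_continuousLinearMap_compl_side huv hH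
  rw [hgH]
  exact (convex_Iic (g u)).linear_preimage (g : Pt →ₗ[ℝ] ℝ)

theorem disjoint_lineThrough_interior_compl_side {u v : Pt} {H : Set Pt} (huv : u ≠ v)
    (hH : H = sidePos u v ∨ H = sideNeg u v) : Disjoint (lineThrough u v) (interior Hᶜ) := by
  obtain ⟨g, hg, hgH, hgL⟩ := exists_continuousLinearMap_compl_side huv hH
  rw [hgH, hgL, g.interior_setOf_le hg]
  exact disjoint_left.mpr fun x hxL hxH ↦ hxH.ne hxL

theorem left_mem_lineThrough (u v : Pt) : u ∈ lineThrough u v := by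
  simp [lineThrough, det2]

theorem cLayer_two_subset (P : Set Pt) : cLayer P 2 ⊆ P \ frontier (convexHull ℝ P) :=
  inter_subset_left

theorem weaklyConvexPos_of_forall_notMem_interior {X : Set Pt}
    (h : ∀ x ∈ X, ∃ t, convexHull ℝ X ⊆ t ∧ x ∉ interior t) : WeaklyConvexPos X := by
  intro x hx
  obtain ⟨t, hXt, hxt⟩ := h x hx
  exact ⟨subset_closure (subset_convexHull ℝ X hx), fun hint ↦ hxt (interior_mono hXt hint)⟩

theorem HullMinimalWeakGon.ncard_inter_iUnion_lt {ι : Type*} {P A B : Set Pt} {m : ℕ}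
    (hP : P.Finite) (hA : HullMinimalWeakGon P A m) (hBP : B ⊆ P)
    (hBA : B ⊆ interior (convexHull ℝ A)) {H L : ι → Set Pt} (hH : ∀ i, Convex ℝ (H i)ᶜ)
    (hLH : ∀ i, Disjoint (L i) (interior (H i)ᶜ)) (hHB : ∀ i, Disjoint (H i) B)
    (hBL : ∃ i, (B ∩ L i).Nonempty) :
    (B ∩ ⋃ i, L i).ncard < (A ∩ ⋃ i, H i).ncard := by
  obtain ⟨hAP, rfl, hAw, hmin⟩ := hA
  have hAfin := hP.subset hAP
  by_contra! hle
  set A' := (A \ ⋃ i, H i) ∪ (B ∩ ⋃ i, L i)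
  have hA'P : A' ⊆ P := union_subset (sdiff_subset.trans hAP) (inter_subset_left.trans hBP)
  have hAB : Disjoint A B := disjoint_left.mpr fun x hxA hxB ↦ (hAw x hxA).2 (hBA hxB)
  have hcard : A.ncard ≤ A'.ncard := by
    rw [ncard_union_eq (hAB.mono sdiff_subset inter_subset_left) hAfin.sdiff
      ((hP.subset hBP).inter_of_left _),
      ← ncard_inter_add_ncard_sdiff_eq_ncard A (⋃ i, H i) hAfin]
    omega
  have hA'A : convexHull ℝ A' ⊆ convexHull ℝ A :=
    convexHull_min (union_subset (sdiff_subset.trans (subset_convexHull ℝ A))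
      (inter_subset_left.trans (hBA.trans interior_subset))) (convex_convexHull ℝ A)
  have hA'H (i) : convexHull ℝ A' ⊆ (H i)ᶜ := by
    refine convexHull_min (union_subset ?_ ?_) (hH i)
    · exact fun x hx hxH ↦ hx.2 (mem_iUnion_of_mem i hxH)
    · exact fun x hx hxH ↦ (hHB i).notMem_of_mem_left hxH hx.1
  have hA'w : WeaklyConvexPos A' := by
    refine weaklyConvexPos_of_forall_notMem_interior fun x hx ↦ ?_
    rcases hx with ⟨hxA, -⟩ | ⟨-, hxL⟩
    · exact ⟨_, hA'A, (hAw x hxA).2⟩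
    · obtain ⟨i, hxi⟩ := mem_iUnion.mp hxL
      exact ⟨_, hA'H i, (hLH i).notMem_of_mem_left hxi⟩
  obtain ⟨i, b, hbB, hbL⟩ := hBL
  obtain ⟨a, haA, haH⟩ := inter_nonempty_of_mem_interior_convexHull (hH i) (hLH i) (hBA hbB) hbL
  exact hmin A' hA'P (hP.subset hA'P) hcard hA'w
    ⟨hA'A, fun h ↦ hA'H i (h (subset_convexHull ℝ A haA)) haH⟩

theorem statement4_general (P : Set Pt) (hP : P.Finite) (m : ℕ)
    (A : Set Pt) (hA : HullMinimalWeakGon P A m) (hPA : P ⊆ convexHull ℝ A)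
    (B : Set Pt) (hB : B = cLayer P 2) :
    (∀ u v H, IsEdgeOf B u v → IsPosSide B u v H →
      (B ∩ lineThrough u v).ncard < (A ∩ H).ncard) ∧
    (∀ (j : ℕ) (e₁ e₂ : Fin j → Pt) (H : Fin j → Set Pt), 1 ≤ j →
      (∀ i, IsEdgeOf B (e₁ i) (e₂ i)) →
      (∀ i, IsPosSide B (e₁ i) (e₂ i) (H i)) →
      (B ∩ ⋃ i, lineThrough (e₁ i) (e₂ i)).ncard < (A ∩ ⋃ i, H i).ncard) := by
  have hconv : convexHull ℝ P = convexHull ℝ A :=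
    (convexHull_min hPA (convex_convexHull ℝ A)).antisymm (convexHull_mono hA.1)
  have hBP : B ⊆ P := hB ▸ (cLayer_two_subset P).trans sdiff_subset
  have hBA : B ⊆ interior (convexHull ℝ A) :=
    hconv ▸ hB ▸ (cLayer_two_subset P).trans (sdiff_frontier_convexHull_subset_interior P)
  have key (j : ℕ) (e₁ e₂ : Fin j → Pt) (H : Fin j → Set Pt) (hj : 1 ≤ j)
      (he : ∀ i, IsEdgeOf B (e₁ i) (e₂ i)) (hH : ∀ i, IsPosSide B (e₁ i) (e₂ i) (H i)) :
      (B ∩ ⋃ i, lineThrough (e₁ i) (e₂ i)).ncard < (A ∩ ⋃ i, H i).ncard :=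
    hA.ncard_inter_iUnion_lt hP hBP hBA (fun i ↦ convex_compl_side (he i).2.2.1 (hH i).1)
      (fun i ↦ disjoint_lineThrough_interior_compl_side (he i).2.2.1 (hH i).1)
      (fun i ↦ disjoint_iff_inter_eq_empty.mpr (hH i).2)
      ⟨⟨0, hj⟩, _, (he _).1, left_mem_lineThrough _ _⟩
  refine ⟨fun u v H he hH ↦ ?_, key⟩
  simpa only [iUnion_const] using
    key 1 (fun _ ↦ u) (fun _ ↦ v) (fun _ ↦ H) le_rfl (fun _ ↦ he) (fun _ ↦ hH)

/-- (Observation 1.) If `A` is a hull-minimal weakly convex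
`m`-gon in `P` with `P ⊆ conv A` and `B` is the second convex layer, then for
every edge `b` of `B`, `|A ∩ b⁺| > |B ∩ l(b)|`; more generally for any edges
`b₁, …, b_j` of `B`, `|A ∩ (b₁⁺ ∪ ⋯ ∪ b_j⁺)| > |B ∩ (l(b₁) ∪ ⋯ ∪ l(b_j))|`. -/
theorem statement4 (P : Set Pt) (hP : P.Finite) (m : ℕ) (hm : 3 ≤ m)
    (A : Set Pt) (hA : HullMinimalWeakGon P A m) (hPA : P ⊆ convexHull ℝ A)
    (B : Set Pt) (hB : B = cLayer P 2) (hBne : B.Nonempty) :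
    (∀ u v H, IsEdgeOf B u v → IsPosSide B u v H →
      (B ∩ lineThrough u v).ncard < (A ∩ H).ncard) ∧
    (∀ (j : ℕ) (e₁ e₂ : Fin j → Pt) (H : Fin j → Set Pt), 1 ≤ j →
      (∀ i, IsEdgeOf B (e₁ i) (e₂ i)) →
      (∀ i, IsPosSide B (e₁ i) (e₂ i) (H i)) →
      (B ∩ ⋃ i, lineThrough (e₁ i) (e₂ i)).ncard < (A ∩ ⋃ i, H i).ncard) :=
  statement4_general P hP m A hA hPA B hB
end

section
/- There exists a countably infinite set S of points in the plane ℝ² in general position (no 3 points of S are collinear) that contains no empty pentagon, i.e., there are no 5 points of S in strictly convex position whose convex hull contains no other point of S. -/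
open Set

/-!
A dense set has no empty convex polygon with at least three vertices: such a polygon has interior
points, a dense set puts one of its points there, and an interior point of the convex hull is not a
vertex. So it suffices to build a countable dense set in general position, which is done greedily:
enumerate a countable basis of the topology and pick the `n`-th point in the `n`-th basic open
set, off the finitely many lines through pairs of earlier points; these lines form a null set.
-/

open Module MeasureTheory

def GeneralPosition {E : Type*} [AddCommGroup E] [Module ℝ E] (S : Set E) : Prop :=
  ∀ x ∈ S, ∀ y ∈ S, ∀ z ∈ S, x ≠ y → y ≠ z → x ≠ z → ¬ Collinear ℝ ({x, y, z} : Set E)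

section GeneralPosition

variable {E : Type*} [AddCommGroup E] [Module ℝ E]

lemma GeneralPosition.insert {S : Set E} {x : E} (hS : GeneralPosition S)
    (hx : ∀ u ∈ S, ∀ v ∈ S, u ≠ v → ¬ Collinear ℝ ({u, v, x} : Set E)) :
    GeneralPosition (insert x S) := by
  intro a ha b hb c hc hab hbc hac
  rcases ha with rfl | ha <;> rcases hb with rfl | hb <;> rcases hc with rfl | hc
  · exact absurd rfl hab
  · exact absurd rfl hab
  · exact absurd rfl hac
  · rw [Set.insert_comm, Set.pair_comm]; exact hx _ hb _ hc hbc
  · exact absurd rfl hbc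
  · rw [Set.pair_comm]; exact hx _ ha _ hc hac
  · exact hx _ ha _ hb hab
  · exact hS _ ha _ hb _ hc hab hbc hac

lemma generalPosition_iUnion_of_directed {ι : Type*} {s : ι → Set E} (hdir : Directed (· ⊆ ·) s)
    (hs : ∀ i, GeneralPosition (s i)) : GeneralPosition (⋃ i, s i) := by
  intro x hx y hy z hz
  obtain ⟨i, hxi⟩ := Set.mem_iUnion.mp hx
  obtain ⟨j, hyj⟩ := Set.mem_iUnion.mp hy
  obtain ⟨k, hzk⟩ := Set.mem_iUnion.mp hz
  obtain ⟨l, hil, hjl⟩ := hdir i j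
  obtain ⟨m, hlm, hkm⟩ := hdir l k
  exact hs m x (hlm (hil hxi)) y (hlm (hjl hyj)) z (hkm hzk)

end GeneralPosition

section Dimension

variable {E : Type*} [AddCommGroup E] [Module ℝ E]

lemma affineSpan_pair_ne_top (hE : 2 ≤ finrank ℝ E) (u v : E) :
    affineSpan ℝ ({u, v} : Set E) ≠ ⊤ := by
  intro h
  have hpair := collinear_pair ℝ u v
  rw [collinear_iff_finrank_le_one, ← direction_affineSpan, h, AffineSubspace.direction_top,
    finrank_top] at hpair
  omega

lemma affineSpan_eq_top_of_not_collinear [FiniteDimensional ℝ E] (hE : finrank ℝ E = 2)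
    {a b c : E} (h : ¬ Collinear ℝ ({a, b, c} : Set E)) : affineSpan ℝ ({a, b, c} : Set E) = ⊤ := by
  have hind := affineIndependent_iff_not_collinear_set.mpr h
  have := hind.affineSpan_eq_top_iff_card_eq_finrank_add_one.mpr (by simp [hE])
  rwa [Matrix.range_cons, Matrix.range_cons_cons_empty, Set.singleton_union] at this

end Dimension

lemma Wbtw.notMem_extremePoints {E : Type*} [AddCommGroup E] [Module ℝ E] {A : Set E}
    {x y z : E} (h : Wbtw ℝ x y z) (hx : x ∈ A) (hz : z ∈ A) (hxy : x ≠ y) (hyz : y ≠ z) :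
    y ∉ A.extremePoints ℝ := fun hy =>
  hxy (mem_extremePoints.mp hy |>.2 x hx z hz
    (mem_openSegment_of_ne_left_right hxy hyz.symm h.mem_segment)).1

lemma not_collinear_of_mem_extremePoints {E : Type*} [AddCommGroup E] [Module ℝ E] {A : Set E}
    {a b c : E} (ha : a ∈ A.extremePoints ℝ) (hb : b ∈ A.extremePoints ℝ)
    (hc : c ∈ A.extremePoints ℝ) (hab : a ≠ b) (hbc : b ≠ c) (hac : a ≠ c) :
    ¬ Collinear ℝ ({a, b, c} : Set E) := by
  intro hcol
  rcases hcol.wbtw_or_wbtw_or_wbtw with h | h | h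
  · exact h.notMem_extremePoints ha.1 hc.1 hab hbc hb
  · exact h.notMem_extremePoints hb.1 ha.1 hbc hac.symm hc
  · exact h.notMem_extremePoints hc.1 hb.1 hac.symm hab ha

lemma IsOpen.exists_mem_forall_not_collinear {E : Type*} [NormedAddCommGroup E]
    [NormedSpace ℝ E] [FiniteDimensional ℝ E] {U : Set E} (hU : IsOpen U) (hne : U.Nonempty)
    (hE : 2 ≤ finrank ℝ E) (F : Finset E) :
    ∃ x ∈ U, ∀ u ∈ F, ∀ v ∈ F, u ≠ v → ¬ Collinear ℝ ({u, v, x} : Set E) := by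
  borelize E
  let μ : Measure E := Measure.addHaar
  set lines : Set E := ⋃ u ∈ F, ⋃ v ∈ F, (affineSpan ℝ ({u, v} : Set E) : Set E)
  have hlines : μ lines = 0 :=
    (measure_biUnion_null_iff F.countable_toSet).mpr fun u _ =>
      (measure_biUnion_null_iff F.countable_toSet).mpr fun v _ =>
        Measure.addHaar_affineSubspace μ _ (affineSpan_pair_ne_top hE u v)
  obtain ⟨x, hxU, hx⟩ : (U \ lines).Nonempty := by
    apply nonempty_of_measure_ne_zero
    rw [measure_sdiff_null hlines]
    exact (hU.measure_pos μ hne).ne'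
  refine ⟨x, hxU, fun u hu v hv huv hcol => hx ?_⟩
  exact Set.mem_biUnion hu (Set.mem_biUnion hv
    (hcol.mem_affineSpan_of_mem_of_ne (by simp) (by simp) (by simp) huv))

def greedyFinset {α : Type*} [DecidableEq α] (next : ℕ → Finset α → α) : ℕ → Finset α
  | 0 => ∅
  | n + 1 => insert (next n (greedyFinset next n)) (greedyFinset next n)

open TopologicalSpace in
lemma exists_countable_dense_generalPosition {E : Type*} [NormedAddCommGroup E]
    [NormedSpace ℝ E] [FiniteDimensional ℝ E] (hE : 2 ≤ finrank ℝ E) :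
    ∃ S : Set E, S.Countable ∧ Dense S ∧ GeneralPosition S := by
  classical
  obtain ⟨B, hBc, hB0, hB⟩ := exists_countable_basis E
  obtain ⟨t, ht, -⟩ := mem_sUnion.mp (hB.sUnion_eq.symm.subset (mem_univ (0 : E)))
  obtain ⟨U, rfl⟩ := hBc.exists_eq_range ⟨t, ht⟩
  have hU (n : ℕ) : IsOpen (U n) ∧ (U n).Nonempty :=
    ⟨hB.isOpen (mem_range_self n), nonempty_iff_ne_empty.mpr fun h => hB0 ⟨n, h⟩⟩
  choose next hnextU hnext using fun n (F : Finset E) =>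
    (hU n).1.exists_mem_forall_not_collinear (hU n).2 hE F
  set F := greedyFinset next
  have hFmono : Monotone fun n => (F n : Set E) :=
    monotone_nat_of_le_succ fun n => Finset.coe_subset.mpr (Finset.subset_insert _ _)
  have hFgp (n : ℕ) : GeneralPosition (F n : Set E) := by
    induction n with
    | zero => simp [F, greedyFinset, GeneralPosition]
    | succ n ih =>
      rw [show F (n + 1) = insert (next n (F n)) (F n) from rfl, Finset.coe_insert]
      exact ih.insert (hnext n (F n))
  refine ⟨⋃ n, (F n : Set E), countable_iUnion fun n => (F n).countable_toSet,
    hB.dense_iff.mpr ?_, generalPosition_iUnion_of_directed hFmono.directed_le hFgp⟩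
  rintro _ ⟨n, rfl⟩ -
  exact ⟨next n (F n), hnextU n (F n), mem_iUnion.mpr ⟨n + 1, Finset.mem_insert_self _ _⟩⟩

lemma Dense.inter_convexHull_ne {S X : Set Pt} (hS : Dense S) (hX : StrictlyConvexPos X)
    (h3 : 2 < X.ncard) : S ∩ convexHull ℝ X ≠ X := by
  intro hempty
  obtain ⟨a, ha, b, hb, c, hc, hab, hac, hbc⟩ :=
    (Set.two_lt_ncard (Set.finite_of_ncard_pos (by omega))).mp h3
  have habc := not_collinear_of_mem_extremePoints (hX a ha) (hX b hb) (hX c hc) hab hbc hac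
  have hspan : affineSpan ℝ X = ⊤ :=
    top_le_iff.mp ((affineSpan_eq_top_of_not_collinear (by simp) habc).ge.trans
      (affineSpan_mono ℝ (by simp [Set.insert_subset_iff, ha, hb, hc])))
  obtain ⟨s, hs, hsS⟩ := hS.inter_open_nonempty _ isOpen_interior
    ((convex_convexHull ℝ X).interior_nonempty_iff_affineSpan_eq_top.mpr
      (by rwa [affineSpan_convexHull]))
  have hsX : s ∈ X := hempty ▸ ⟨hsS, interior_subset hs⟩
  exact Set.disjoint_left.mp (disjoint_interior_extremePoints _) hs (hX s hsX)

lemma Dense.not_hasEmptyPentagon {S : Set Pt} (hS : Dense S) : ¬ HasEmptyPentagon S :=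
  fun ⟨_, _, h5, hX, hempty⟩ => hS.inter_convexHull_ne hX (by omega) hempty

/-- There is a countably infinite set of points in the plane
in general position (no 3 collinear) containing no empty pentagon. -/
theorem statement17 :
    ∃ S : Set Pt, S.Countable ∧ S.Infinite ∧
      (∀ x ∈ S, ∀ y ∈ S, ∀ z ∈ S, x ≠ y → y ≠ z → x ≠ z →
        ¬ Collinear ℝ ({x, y, z} : Set Pt)) ∧
      ¬ HasEmptyPentagon S := by
  obtain ⟨S, hcount, hdense, hgp⟩ := exists_countable_dense_generalPosition (E := Pt) (by simp)
  refine ⟨S, hcount, fun hfin => ?_, hgp, hdense.not_hasEmptyPentagon⟩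
  simpa using (hdense.sdiff_finite hfin).nonempty
end
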